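/- arXiv:2107.05772 — 3 statements merged into one kernel-verified Lean document; each statement's English description precedes it below -/
import Mathlib

section
/- For any tree T on n vertices with at least one edge, BBC_λ(K_n, T) ≥ min{λ + |C1(T)|, 2λ + 1}, where C1(T) is the larger color class of the proper 2-coloring of T. -/
/-- A λ-backbone coloring of the complete graph `K_n` with backbone `T`, using colors
in `{1,...,k}`. -/
def IsCliqueBackboneColoring {V : Type*} (T : SimpleGraph V) (lam k : ℕ) (c : V → ℕ) : Prop :=
  Function.Injective c ∧
  (∀ v, c v ∈ Finset.Icc 1 k) ∧
  (∀ u v, T.Adj u v → (lam : ℤ) ≤ |(c u : ℤ) - (c v : ℤ)|)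

/-- `BBC_λ(K_n, T)`. -/
noncomputable def BBCclique {V : Type*} (T : SimpleGraph V) (lam : ℕ) : ℕ :=
  sInf {k | ∃ c : V → ℕ, IsCliqueBackboneColoring T lam k c}

/-- For any tree `T` on `n` vertices with at least one edge,
`BBC_λ(K_n, T) ≥ min {λ + |C1(T)|, 2λ + 1}`, where `C1(T)` is the larger color
class of the proper 2-coloring of `T`. -/
theorem bbc_clique_tree_lower {V : Type*} [Fintype V] [DecidableEq V]
    (T : SimpleGraph V) (hT : T.IsTree) (hedge : ∃ u v : V, T.Adj u v)
    (C1 C2 : Finset V) (hdisj : Disjoint C1 C2) (hcover : C1 ∪ C2 = Finset.univ)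
    (hproper : ∀ u v : V, T.Adj u v →
      ((u ∈ C1 ∧ v ∈ C2) ∨ (u ∈ C2 ∧ v ∈ C1)))
    (hsize : C2.card ≤ C1.card)
    (lam : ℕ) (hlam : 2 ≤ lam) :
    min (lam + C1.card) (2 * lam + 1) ≤ BBCclique T lam := by
  have hconn : T.Connected := hT.isConnected
  -- The defining set is nonempty: spread colors with gaps lam.
  have hne : {k | ∃ c : V → ℕ, IsCliqueBackboneColoring T lam k c}.Nonempty := by
    refine ⟨lam * Fintype.card V + 1,
      fun v => lam * ((Fintype.equivFin V) v : ℕ) + 1, ?_, ?_, ?_⟩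
    · intro u v h
      simp only [] at h
      have h' : lam * ((Fintype.equivFin V) u : ℕ) = lam * ((Fintype.equivFin V) v : ℕ) := by
        omega
      have hlam0 : 0 < lam := by omega
      have : ((Fintype.equivFin V) u : ℕ) = ((Fintype.equivFin V) v : ℕ) :=
        Nat.eq_of_mul_eq_mul_left hlam0 h'
      exact (Fintype.equivFin V).injective (Fin.val_injective this)
    · intro v
      simp only [Finset.mem_Icc]
      constructor
      · omega
      · have : ((Fintype.equivFin V) v : ℕ) ≤ Fintype.card V :=
          le_of_lt ((Fintype.equivFin V) v).is_lt
        have := Nat.mul_le_mul_left lam this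
        omega
    · intro u v huv
      have hne' : ((Fintype.equivFin V) u : ℕ) ≠ ((Fintype.equivFin V) v : ℕ) := by
        intro h
        exact huv.ne ((Fintype.equivFin V).injective (Fin.val_injective h))
      set a := ((Fintype.equivFin V) u : ℕ)
      set b := ((Fintype.equivFin V) v : ℕ)
      rcases Nat.lt_or_ge a b with h | h
      · have h1 : lam * (a + 1) ≤ lam * b := Nat.mul_le_mul_left lam h
        refine le_abs.mpr (Or.inr ?_)
        push_cast
        have : (lam : ℤ) * (a + 1) ≤ lam * b := by exact_mod_cast h1
        linarith
      · have hlt : b < a := lt_of_le_of_ne h (Ne.symm hne')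
        have h1 : lam * (b + 1) ≤ lam * a := Nat.mul_le_mul_left lam hlt
        refine le_abs.mpr (Or.inl ?_)
        push_cast
        have : (lam : ℤ) * (b + 1) ≤ lam * a := by exact_mod_cast h1
        linarith
  rw [BBCclique]
  refine le_csInf hne ?_
  rintro k ⟨c, hinj, hmem, hgap⟩
  by_contra hk
  push_neg at hk
  have hk1 : k < lam + C1.card := lt_of_lt_of_le hk (min_le_left _ _)
  have hk2 : k ≤ 2 * lam := by
    have := lt_of_lt_of_le hk (min_le_right _ _)
    omega
  have hc1 : ∀ v, 1 ≤ c v := fun v => (Finset.mem_Icc.mp (hmem v)).1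
  have hck : ∀ v, c v ≤ k := fun v => (Finset.mem_Icc.mp (hmem v)).2
  -- each edge: one low endpoint, one high endpoint
  have hedgeLH : ∀ u v, T.Adj u v →
      (c u + lam ≤ k ∧ lam + 1 ≤ c v) ∨ (c v + lam ≤ k ∧ lam + 1 ≤ c u) := by
    intro u v h
    have := hgap u v h
    rcases le_abs.mp this with h' | h'
    · right
      have : (lam : ℤ) + c v ≤ c u := by linarith
      have hn : lam + c v ≤ c u := by exact_mod_cast this
      have := hck u; have := hc1 v
      omega
    · left
      have : (lam : ℤ) + c u ≤ c v := by linarith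
      have hn : lam + c u ≤ c v := by exact_mod_cast this
      have := hck v; have := hc1 u
      omega
  -- every vertex has a neighbor
  have hdeg : ∀ x : V, ∃ y, T.Adj x y := by
    intro x
    obtain ⟨u, v, huv⟩ := hedge
    obtain ⟨p⟩ := hconn.preconnected x u
    cases p with
    | nil => exact ⟨v, huv⟩
    | cons h _ => exact ⟨_, h⟩
  -- low and high are exclusive; every vertex is low or high
  have hexcl : ∀ v, ¬ (c v + lam ≤ k ∧ lam + 1 ≤ c v) := by
    intro v ⟨h1, h2⟩; omega
  have hLH : ∀ v, c v + lam ≤ k ∨ lam + 1 ≤ c v := by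
    intro v
    obtain ⟨w, hw⟩ := hdeg v
    rcases hedgeLH v w hw with ⟨h1, _⟩ | ⟨_, h2⟩
    · exact Or.inl h1
    · exact Or.inr h2
  have hmemC : ∀ v : V, v ∈ C1 ∨ v ∈ C2 := by
    intro v
    have : v ∈ C1 ∪ C2 := hcover ▸ Finset.mem_univ v
    exact Finset.mem_union.mp this
  have hnot : ∀ v : V, v ∈ C2 → v ∉ C1 := by
    intro v h2 h1
    exact Finset.disjoint_left.mp hdisj h1 h2
  -- Q v := (low v ↔ v ∈ C1) is invariant along edges
  have hQ : ∀ u v, T.Adj u v →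
      ((c u + lam ≤ k ↔ u ∈ C1) ↔ (c v + lam ≤ k ↔ v ∈ C1)) := by
    intro u v h
    have h1 := hedgeLH u v h
    have h2 := hproper u v h
    have hL : (c u + lam ≤ k) ↔ ¬ (c v + lam ≤ k) := by
      constructor
      · intro hu hv
        rcases h1 with ⟨_, hv'⟩ | ⟨_, hu'⟩
        · exact hexcl v ⟨hv, hv'⟩
        · exact hexcl u ⟨hu, hu'⟩
      · intro hnv
        rcases h1 with ⟨hu, _⟩ | ⟨hv, _⟩
        · exact hu
        · exact absurd hv hnv
    have hC : u ∈ C1 ↔ ¬ (v ∈ C1) := by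
      rcases h2 with ⟨hu, hv⟩ | ⟨hu, hv⟩
      · exact iff_of_true hu (hnot v hv)
      · exact iff_of_false (hnot u hu) (not_not_intro hv)
    rw [hL, hC]
    tauto
  have hreach : ∀ u v : V,
      ((c u + lam ≤ k ↔ u ∈ C1) ↔ (c v + lam ≤ k ↔ v ∈ C1)) := by
    intro u v
    obtain ⟨p⟩ := hconn.preconnected u v
    induction p with
    | nil => exact Iff.rfl
    | cons h _ ih => exact (hQ _ _ h).trans ih
  -- k ≥ lam + 1
  obtain ⟨u0, v0, h0⟩ := hedge
  have hklam : lam + 1 ≤ k := by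
    rcases hedgeLH u0 v0 h0 with ⟨h1, _⟩ | ⟨h1, _⟩ <;>
      · have := hc1 u0; have := hc1 v0; omega
  -- case split on Q at u0
  have hcases : (∀ v, v ∈ C1 → c v + lam ≤ k) ∨ (∀ v, v ∈ C1 → lam + 1 ≤ c v) := by
    by_cases hQ0 : (c u0 + lam ≤ k ↔ u0 ∈ C1)
    · left
      intro v hv
      have := (hreach u0 v).mp hQ0
      exact this.mpr hv
    · right
      intro v hv
      have hQv : ¬ (c v + lam ≤ k ↔ v ∈ C1) := fun h => hQ0 ((hreach u0 v).mpr h)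
      rcases hLH v with hl | hh
      · exact absurd (iff_of_true hl hv) hQv
      · exact hh
  have hcard : C1.card ≤ k - lam := by
    rcases hcases with hcase | hcase
    · have : C1.card ≤ (Finset.Icc 1 (k - lam)).card := by
        apply Finset.card_le_card_of_injOn c
        · intro v hv
          have := hcase v hv
          have := hc1 v
          simp only [Finset.mem_coe, Finset.mem_Icc]
          omega
        · exact fun a _ b _ h => hinj h
      simpa [Nat.card_Icc] using this
    · have : C1.card ≤ (Finset.Icc (lam + 1) k).card := by
        apply Finset.card_le_card_of_injOn c
        · intro v hv
          have := hcase v hv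
          have := hck v
          simp only [Finset.mem_coe, Finset.mem_Icc]
          omega
        · exact fun a _ b _ h => hinj h
      simpa [Nat.card_Icc] using this
  omega
end

section
/- Let T be a tree on n vertices, λ ≥ 2, and l a positive integer with 2λ + l ≥ n. If T admits no partition V(T) = R ∪ B ∪ Y with R, B independent, |Y| ≤ l, and |R| − |B| = k for any k ∈ [0, min{λ − 1, 2λ − n + l}], then BBC_λ(K_n, T) > 2λ + l. -/
/-- Let `T` be a tree on `n` vertices, `λ ≥ 2`, and `l ≥ 1` with
`2λ + l ≥ n`. If `T` admits no partition `V(T) = R ∪ B ∪ Y` with `R`, `B`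
independent, `|Y| ≤ l` and `|R| − |B| = k` for any
`k ∈ [0, min {λ − 1, 2λ − n + l}]`, then `BBC_λ(K_n, T) > 2λ + l`. -/
theorem bbc_impossibility {V : Type*} [Fintype V] [DecidableEq V]
    (T : SimpleGraph V) (hT : T.IsTree)
    (lam l : ℕ) (hlam : 2 ≤ lam) (hl : 1 ≤ l)
    (hn : Fintype.card V ≤ 2 * lam + l)
    (hno : ¬ ∃ (R B Y : Finset V) (k : ℤ),
      0 ≤ k ∧ k ≤ min ((lam : ℤ) - 1) (2 * (lam : ℤ) - Fintype.card V + l) ∧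
      Disjoint R B ∧ Disjoint R Y ∧ Disjoint B Y ∧
      R ∪ B ∪ Y = Finset.univ ∧
      (∀ u ∈ R, ∀ v ∈ R, ¬ T.Adj u v) ∧
      (∀ u ∈ B, ∀ v ∈ B, ¬ T.Adj u v) ∧
      Y.card ≤ l ∧
      (R.card : ℤ) - B.card = k) :
    2 * lam + l < BBCclique T lam := by
  classical
  -- The set of admissible numbers of colors is nonempty.
  have hSne : {k | ∃ c : V → ℕ, IsCliqueBackboneColoring T lam k c}.Nonempty := by
    set e := Fintype.equivFin V with he
    refine ⟨1 + lam * Fintype.card V, fun v => 1 + lam * (e v : ℕ), ?_, ?_, ?_⟩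
    · intro u v huv
      have h0 : 1 + lam * (e u : ℕ) = 1 + lam * (e v : ℕ) := huv
      have h1 : lam * (e u : ℕ) = lam * (e v : ℕ) := by omega
      have h2 : (e u : ℕ) = (e v : ℕ) := Nat.eq_of_mul_eq_mul_left (by omega) h1
      exact e.injective (Fin.val_injective h2)
    · intro v
      have h1 := (e v).isLt
      have h2 : lam * (e v : ℕ) ≤ lam * Fintype.card V :=
        Nat.mul_le_mul_left _ (by omega)
      simp only [Finset.mem_Icc]
      omega
    · intro u v hadj
      have hne : ((e u : ℕ) : ℤ) ≠ ((e v : ℕ) : ℤ) := by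
        intro h
        exact hadj.ne (e.injective (Fin.val_injective (by exact_mod_cast h)))
      have heq : ((1 + lam * (e u : ℕ) : ℕ) : ℤ) - ((1 + lam * (e v : ℕ) : ℕ) : ℤ)
          = (lam : ℤ) * (((e u : ℕ) : ℤ) - ((e v : ℕ) : ℤ)) := by push_cast; ring
      rw [heq, abs_mul, abs_of_nonneg (by positivity : (0:ℤ) ≤ (lam:ℤ))]
      have h1 : 1 ≤ |((e u : ℕ) : ℤ) - ((e v : ℕ) : ℤ)| := Int.one_le_abs (by omega)
      exact le_mul_of_one_le_right (by positivity) h1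
  -- Every admissible number of colors exceeds 2λ + l.
  have hkey : ∀ m ∈ {k | ∃ c : V → ℕ, IsCliqueBackboneColoring T lam k c}, 2 * lam + l < m := by
    intro m hm
    by_contra hlt
    push_neg at hlt
    obtain ⟨c, hinj, hmemc, hedge⟩ := hm
    have hcub : ∀ v, 1 ≤ c v ∧ c v ≤ 2 * lam + l := by
      intro v
      have h := hmemc v
      rw [Finset.mem_Icc] at h
      omega
    set R : Finset V := Finset.univ.filter (fun v => c v ≤ lam) with hRdef
    set B : Finset V := Finset.univ.filter (fun v => lam + l + 1 ≤ c v) with hBdef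
    set Y : Finset V := Finset.univ.filter (fun v => lam + 1 ≤ c v ∧ c v ≤ lam + l) with hYdef
    have hRB : Disjoint R B := by
      rw [Finset.disjoint_left]
      intro v hv hv'
      simp only [hRdef, hBdef, Finset.mem_filter, Finset.mem_univ, true_and] at hv hv'
      omega
    have hRY : Disjoint R Y := by
      rw [Finset.disjoint_left]
      intro v hv hv'
      simp only [hRdef, hYdef, Finset.mem_filter, Finset.mem_univ, true_and] at hv hv'
      omega
    have hBY : Disjoint B Y := by
      rw [Finset.disjoint_left]
      intro v hv hv'
      simp only [hBdef, hYdef, Finset.mem_filter, Finset.mem_univ, true_and] at hv hv'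
      omega
    have hU : R ∪ B ∪ Y = Finset.univ := by
      ext v
      simp only [hRdef, hBdef, hYdef, Finset.mem_union, Finset.mem_filter, Finset.mem_univ,
        true_and, iff_true]
      have := hcub v
      omega
    have cardR : R.card ≤ lam := by
      have h : R.card ≤ (Finset.Icc 1 lam).card := by
        apply Finset.card_le_card_of_injOn c
        · intro v hv
          simp only [hRdef, Finset.mem_coe, Finset.mem_filter, Finset.mem_univ, true_and] at hv
          rw [Finset.mem_coe, Finset.mem_Icc]
          exact ⟨(hcub v).1, hv⟩
        · exact Set.injOn_of_injective hinj
      simpa [Nat.card_Icc] using h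
    have cardB : B.card ≤ lam := by
      have h : B.card ≤ (Finset.Icc (lam + l + 1) (2 * lam + l)).card := by
        apply Finset.card_le_card_of_injOn c
        · intro v hv
          simp only [hBdef, Finset.mem_coe, Finset.mem_filter, Finset.mem_univ, true_and] at hv
          rw [Finset.mem_coe, Finset.mem_Icc]
          exact ⟨hv, (hcub v).2⟩
        · exact Set.injOn_of_injective hinj
      rw [Nat.card_Icc] at h
      omega
    have cardY : Y.card ≤ l := by
      have h : Y.card ≤ (Finset.Icc (lam + 1) (lam + l)).card := by
        apply Finset.card_le_card_of_injOn c
        · intro v hv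
          simp only [hYdef, Finset.mem_coe, Finset.mem_filter, Finset.mem_univ, true_and] at hv
          rw [Finset.mem_coe, Finset.mem_Icc]
          exact ⟨hv.1, hv.2⟩
        · exact Set.injOn_of_injective hinj
      rw [Nat.card_Icc] at h
      omega
    have hRind : ∀ u ∈ R, ∀ v ∈ R, ¬ T.Adj u v := by
      intro u hu v hv hadj
      simp only [hRdef, Finset.mem_filter, Finset.mem_univ, true_and] at hu hv
      have h := hedge u v hadj
      have h1 := (hcub u).1
      have h2 := (hcub v).1
      rcases abs_cases ((c u : ℤ) - (c v : ℤ)) with ⟨heq, _⟩ | ⟨heq, _⟩ <;>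
        rw [heq] at h <;> omega
    have hBind : ∀ u ∈ B, ∀ v ∈ B, ¬ T.Adj u v := by
      intro u hu v hv hadj
      simp only [hBdef, Finset.mem_filter, Finset.mem_univ, true_and] at hu hv
      have h := hedge u v hadj
      have h1 := (hcub u).2
      have h2 := (hcub v).2
      rcases abs_cases ((c u : ℤ) - (c v : ℤ)) with ⟨heq, _⟩ | ⟨heq, _⟩ <;>
        rw [heq] at h <;> omega
    have sumcard : ∀ (R' B' : Finset V), Disjoint R' B' → Disjoint R' Y → Disjoint B' Y →
        R' ∪ B' ∪ Y = Finset.univ → R'.card + B'.card + Y.card = Fintype.card V := by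
      intro R' B' h1 h2 h3 hU'
      have hd : Disjoint (R' ∪ B') Y := Finset.disjoint_union_left.mpr ⟨h2, h3⟩
      calc R'.card + B'.card + Y.card
          = (R' ∪ B').card + Y.card := by rw [Finset.card_union_of_disjoint h1]
        _ = ((R' ∪ B') ∪ Y).card := (Finset.card_union_of_disjoint hd).symm
        _ = Fintype.card V := by rw [hU', Finset.card_univ]
    have key : ∀ (R' B' : Finset V),
        Disjoint R' B' → Disjoint R' Y → Disjoint B' Y →
        R' ∪ B' ∪ Y = Finset.univ →
        (∀ u ∈ R', ∀ v ∈ R', ¬ T.Adj u v) →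
        (∀ u ∈ B', ∀ v ∈ B', ¬ T.Adj u v) →
        R'.card ≤ lam → B'.card ≤ R'.card → False := by
      intro R' B' hRB' hRY' hBY' hU' hRi hBi hRl hle
      have hsum' : R'.card + B'.card + Y.card = Fintype.card V :=
        sumcard R' B' hRB' hRY' hBY' hU'
      by_cases hk : (R'.card : ℤ) - B'.card ≤ (lam : ℤ) - 1
      · exact hno ⟨R', B', Y, (R'.card : ℤ) - B'.card, by omega,
          le_min hk (by omega), hRB', hRY', hBY', hU', hRi, hBi, cardY, rfl⟩
      · push_neg at hk
        have hB0 : B'.card = 0 := by omega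
        have hRlam' : R'.card = lam := by omega
        have hB'e : B' = ∅ := Finset.card_eq_zero.mp hB0
        have hYne : Y.Nonempty := by
          by_contra hye
          rw [Finset.not_nonempty_iff_eq_empty] at hye
          have hRuniv : R' = Finset.univ := by
            rw [hB'e, hye] at hU'
            simpa using hU'
          have hn2 : 1 < Fintype.card V := by omega
          obtain ⟨a, b, hab⟩ := Fintype.exists_pair_of_one_lt_card hn2
          obtain ⟨w⟩ := hT.isConnected.preconnected a b
          cases w with
          | nil => exact hab rfl
          | cons h p =>
            exact hRi _ (by simp [hRuniv]) _ (by simp [hRuniv]) h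
        obtain ⟨y, hy⟩ := hYne
        refine hno ⟨R', {y}, Y.erase y, (lam : ℤ) - 1, by omega, ?_, ?_, ?_, ?_, ?_, hRi,
          ?_, ?_, ?_⟩
        · refine le_min le_rfl ?_
          omega
        · exact Finset.disjoint_singleton_right.mpr
            (fun h => Finset.disjoint_left.mp hRY' h hy)
        · exact hRY'.mono_right (Finset.erase_subset _ _)
        · exact Finset.disjoint_singleton_left.mpr (Finset.notMem_erase y Y)
        · rw [Finset.union_assoc, ← Finset.insert_eq, Finset.insert_erase hy]
          rw [hB'e] at hU'
          simpa using hU'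
        · intro u hu v hv hadj
          rw [Finset.mem_singleton] at hu hv
          subst hu; subst hv
          exact hadj.ne rfl
        · rw [Finset.card_erase_of_mem hy]
          omega
        · rw [Finset.card_singleton, hRlam']
          push_cast
          ring
    rcases le_total B.card R.card with h | h
    · exact key R B hRB hRY hBY hU hRind hBind cardR h
    · refine key B R hRB.symm hBY hRY ?_ hBind hRind cardB h
      rw [Finset.union_comm B R]
      exact hU
  unfold BBCclique
  exact hkey _ (Nat.sInf_mem hSne)
end

section
/- If a star K_{1,n−1} is the backbone T of K_n, then BBC_λ(K_n, T) = λ + n − 1. -/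
/-- If the backbone `T` of `K_n` is a star `K_{1,n−1}` (a center `v0`
adjacent to all other vertices), then `BBC_λ(K_n, T) = λ + n − 1`. -/
theorem bbc_clique_star {V : Type*} [Fintype V] [DecidableEq V]
    (hn : 2 ≤ Fintype.card V) (v0 : V)
    (T : SimpleGraph V) (hstar : ∀ u v : V, T.Adj u v ↔ (u ≠ v ∧ (u = v0 ∨ v = v0)))
    (lam : ℕ) (hlam : 2 ≤ lam) :
    BBCclique T lam = lam + Fintype.card V - 1 := by
  set n := Fintype.card V with hncard
  -- the construction
  have hmem : (lam + n - 1) ∈ {k | ∃ c : V → ℕ, IsCliqueBackboneColoring T lam k c} := by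
    let e : V ≃ Fin n := Fintype.equivFin V
    let σ : V ≃ Fin n := e.trans (Equiv.swap (e v0) ⟨0, by omega⟩)
    have hσ0 : σ v0 = ⟨0, by omega⟩ := by
      simp [σ, Equiv.swap_apply_left]
    refine ⟨fun v => if v = v0 then 1 else lam + (σ v).val, ?_, ?_, ?_⟩
    · intro u v huv
      by_cases hu : u = v0 <;> by_cases hv : v = v0 <;> simp [hu, hv] at huv ⊢
      · exact absurd huv.symm (by have := (σ v).isLt; omega)
      · exact absurd huv (by have := (σ u).isLt; omega)
      · exact σ.injective (Fin.ext huv)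
    · intro v
      by_cases hv : v = v0
      · simp [hv, Finset.mem_Icc]; omega
      · have h1 : (σ v).val ≠ 0 := by
          intro h
          exact hv (σ.injective (by rw [hσ0]; exact Fin.ext h))
        have h2 := (σ v).isLt
        simp only [hv, if_false, Finset.mem_Icc]
        omega
    · intro u v huv
      rw [hstar] at huv
      obtain ⟨hne, h | h⟩ := huv
      · have hv : v ≠ v0 := fun hh => hne (h.trans hh.symm)
        have h1 : (σ v).val ≠ 0 := by
          intro hh
          exact hv (σ.injective (by rw [hσ0]; exact Fin.ext hh))
        simp only [h, if_pos rfl, hv, if_false]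
        rw [abs_sub_comm, abs_of_nonneg (by push_cast; omega)]
        push_cast; omega
      · have hu : u ≠ v0 := fun hh => hne (hh.trans h.symm)
        have h1 : (σ u).val ≠ 0 := by
          intro hh
          exact hu (σ.injective (by rw [hσ0]; exact Fin.ext hh))
        simp only [h, if_pos rfl, hu, if_false]
        rw [abs_of_nonneg (by push_cast; omega)]
        push_cast; omega
  refine le_antisymm (Nat.sInf_le hmem) (le_csInf ⟨_, hmem⟩ ?_)
  rintro k ⟨c, hinj, hrange, hdist⟩
  -- lower bound
  set c0 := c v0 with hc0
  have hc0mem := hrange v0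
  rw [Finset.mem_Icc] at hc0mem
  have hsub : (Finset.univ.erase v0).image c ⊆
      Finset.Icc 1 (c0 - lam) ∪ Finset.Icc (c0 + lam) k := by
    intro x hx
    simp only [Finset.mem_image, Finset.mem_erase, Finset.mem_univ, and_true] at hx
    obtain ⟨v, hv, rfl⟩ := hx
    have hadj : T.Adj v0 v := (hstar v0 v).2 ⟨fun h => hv h.symm, Or.inl rfl⟩
    have hd := hdist v0 v hadj
    have hm := hrange v
    rw [Finset.mem_Icc] at hm
    simp only [Finset.mem_union, Finset.mem_Icc]
    rcases le_abs.mp hd with h | h <;> push_cast at h <;> omega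
  have hcard : n - 1 ≤ (c0 - lam) + (k + 1 - (c0 + lam)) := by
    have h1 : ((Finset.univ.erase v0).image c).card = n - 1 := by
      rw [Finset.card_image_of_injective _ hinj, Finset.card_erase_of_mem (Finset.mem_univ _),
        Finset.card_univ]
    calc n - 1 = ((Finset.univ.erase v0).image c).card := h1.symm
      _ ≤ (Finset.Icc 1 (c0 - lam) ∪ Finset.Icc (c0 + lam) k).card := Finset.card_le_card hsub
      _ ≤ (Finset.Icc 1 (c0 - lam)).card + (Finset.Icc (c0 + lam) k).card :=
          Finset.card_union_le _ _
      _ = (c0 - lam) + (k + 1 - (c0 + lam)) := by rw [Nat.card_Icc, Nat.card_Icc]; omega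
  omega
end
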